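/- Let a₀, a₁ ∈ ℝ with a₀ a₁ > 0 and T* = 1/(48 a₀ a₁). Then for u(r,t) = a₀/(1 − 48 a₀ a₁ t) · r⁴/(48 a₁) + 1/(36 a₁²) ln(1 − 48 a₀ a₁ t) + a₂: u(0,t) → −∞ as t ↗ T*, and for every r > 0, u(r,t) → +∞ as t ↗ T*. -/

import Mathlib

noncomputable section

/-- The explicit radial solution on the plane. -/
def U (a₀ a₁ a₂ r t : ℝ) : ℝ :=
  a₀ / (1 - 48 * a₀ * a₁ * t) * (r ^ 4 / (48 * a₁)) +
    1 / (36 * a₁ ^ 2) * Real.log (1 - 48 * a₀ * a₁ * t) + a₂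

/-!
With `s = 1 - 48 a₀ a₁ t`, which tends to `0⁺` as `t ↗ T*`, the solution is
`u = K / s + L log s + a₂` with `L = 1/(36 a₁²) > 0` and `K = a₀ r⁴/(48 a₁)`, positive for `r > 0`
because `a₀ a₁ > 0`. At `r = 0` only the logarithm survives and `u → -∞`; for `r > 0` the pole
`K / s` beats the logarithm, since `K / s + L log s = (K + L s log s) / s` and `s log s → 0`.
-/

open Filter Topology Real

lemma tendsto_one_sub_mul_nhdsLT_inv {c : ℝ} (hc : 0 < c) :
    Tendsto (fun t => 1 - c * t) (𝓝[<] (1 / c)) (𝓝[>] 0) := by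
  refine tendsto_nhdsWithin_of_tendsto_nhds_of_eventually_within _ ?_ ?_
  · have hcont : Tendsto (fun t => 1 - c * t) (𝓝 (1 / c)) (𝓝 (1 - c * (1 / c))) :=
      (continuous_const.sub (continuous_const.mul continuous_id)).tendsto _
    rw [mul_one_div_cancel hc.ne', sub_self] at hcont
    exact hcont.mono_left nhdsWithin_le_nhds
  · filter_upwards [self_mem_nhdsWithin] with t (ht : t < 1 / c)
    have : c * t < 1 := by rwa [lt_div_iff₀' hc] at ht
    simpa only [Set.mem_Ioi, sub_pos] using this

lemma tendsto_div_add_mul_log_nhdsGT_zero {K : ℝ} (hK : 0 < K) (L : ℝ) :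
    Tendsto (fun s => K / s + L * log s) (𝓝[>] 0) atTop := by
  have hmul_log : Tendsto (fun s => s * log s) (𝓝[>] 0) (𝓝 0) := by
    simpa using (continuous_mul_log.tendsto 0).mono_left nhdsWithin_le_nhds
  have hnum : Tendsto (fun s => K + L * (s * log s)) (𝓝[>] 0) (𝓝 K) := by
    simpa using tendsto_const_nhds.add (hmul_log.const_mul L)
  refine (hnum.pos_mul_atTop hK tendsto_inv_nhdsGT_zero).congr' ?_
  filter_upwards [self_mem_nhdsWithin] with s (hs : 0 < s)
  field_simp

/-- If `a₀a₁ > 0` and `T* = 1/(48a₀a₁)`: `u(0,t) → −∞` and, for every `r > 0`,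
`u(r,t) → +∞` as `t ↗ T*`. -/
theorem stmt10 (a₀ a₁ a₂ : ℝ) (h : a₀ * a₁ > 0) :
    Filter.Tendsto (fun t => U a₀ a₁ a₂ 0 t)
      (nhdsWithin (1 / (48 * a₀ * a₁)) (Set.Iio (1 / (48 * a₀ * a₁)))) Filter.atBot ∧
    ∀ r : ℝ, r > 0 →
      Filter.Tendsto (fun t => U a₀ a₁ a₂ r t)
        (nhdsWithin (1 / (48 * a₀ * a₁)) (Set.Iio (1 / (48 * a₀ * a₁)))) Filter.atTop := by
  have ha₁ : a₁ ≠ 0 := by rintro rfl; simp at h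
  have hL : 0 < 1 / (36 * a₁ ^ 2) := by positivity
  have hs := tendsto_one_sub_mul_nhdsLT_inv (c := 48 * a₀ * a₁) (by linarith)
  refine ⟨?_, fun r hr => ?_⟩
  · have hlog := tendsto_atBot_add_const_right _ a₂ (tendsto_log_nhdsGT_zero.const_mul_atBot hL)
    refine (hlog.comp hs).congr fun t => ?_
    simp [U]
  · have hK : 0 < a₀ * r ^ 4 / (48 * a₁) := by
      have hK_eq : a₀ * r ^ 4 / (48 * a₁) = a₀ * a₁ * (r ^ 4 / (48 * a₁ ^ 2)) := by
        field_simp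
      rw [hK_eq]
      positivity
    have hpole := tendsto_atTop_add_const_right _ a₂
      (tendsto_div_add_mul_log_nhdsGT_zero hK (1 / (36 * a₁ ^ 2)))
    refine (hpole.comp hs).congr fun t => ?_
    simp only [U, Function.comp_apply]
    ring
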